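/- Let (ζ_n)_{n≥1} be a sequence in D^×. If (ζ_n) possesses a biorthogonal sequence (ξ_n)_{n≥1} ⊂ D (i.e. ζ_n(ξ_k) = δ_{nk} for all n,k) whose linear span is dense in D[t] and which is Riesz-Fischer-like, then (ζ_n) is a Bessel-like sequence. -/

import Mathlib

/-! Fix an orthonormal basis `(e_n)` of `H` indexed by `ℕ` (it exists because `H` is separable
and infinite-dimensional) and the map `S` that the Riesz-Fischer-like property gives for it.
The conjugate-linear functionals `ζ_k` and `η ↦ ⟪S η, e_k⟫` agree on the total sequence `ξ`, so
they are equal, and Bessel's inequality gives `Σ_k |ζ_k η|² ≤ ‖S η‖²`, which is bounded on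
every bounded set since `S` is continuous. -/

open Filter Topology

noncomputable section

/-- A sequence `ζ` in the conjugate dual `D^×` is Bessel-like if on every von Neumann bounded
subset `M` of `D` the quantities `Σ_k |ζ k η|²` are uniformly bounded. -/
def BesselLike {D : Type*} [AddCommGroup D] [Module ℂ D] [TopologicalSpace D]
    (ζ : ℕ → (D →SL[starRingEnd ℂ] ℂ)) : Prop :=
  ∀ M : Set D, Bornology.IsVonNBounded ℂ M →
    ∃ γ : ℝ, ∀ η ∈ M, ∀ N : ℕ, ∑ k ∈ Finset.range N, ‖ζ k η‖ ^ 2 ≤ γ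

/-- A sequence in an inner product space is an orthonormal basis (sequence) if it is orthonormal
and has dense linear span. -/
def IsONBasisSeq {K : Type*} [NormedAddCommGroup K] [InnerProductSpace ℂ K] (e : ℕ → K) : Prop :=
  Orthonormal ℂ e ∧ Dense ((Submodule.span ℂ (Set.range e) : Submodule ℂ K) : Set K)

/-- A sequence `ξ ⊂ D` is Riesz-Fischer-like (w.r.t. the Hilbert space `H`) if for every
orthonormal basis `(e_n)` of `H` there is a continuous linear map `S : D → H` with
`S ξ_n = e_n` for all `n`. -/
def RieszFischerLike (H : Type*) [NormedAddCommGroup H] [InnerProductSpace ℂ H]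
    {D : Type*} [AddCommGroup D] [Module ℂ D] [TopologicalSpace D] (ξ : ℕ → D) : Prop :=
  ∀ e : ℕ → H, IsONBasisSeq e → ∃ S : D →L[ℂ] H, ∀ n : ℕ, S (ξ n) = e n

open scoped InnerProductSpace

section Orthonormal

variable {𝕜 E ι : Type*} [RCLike 𝕜] [NormedAddCommGroup E] [InnerProductSpace 𝕜 E] {v : ι → E}

theorem Orthonormal.norm_sub_sq (hv : Orthonormal 𝕜 v) {i j : ι} (hij : i ≠ j) :
    ‖v i - v j‖ ^ 2 = 2 := by
  rw [_root_.norm_sub_sq (𝕜 := 𝕜), hv.2 hij, hv.1 i, hv.1 j]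
  norm_num

theorem Orthonormal.one_lt_dist (hv : Orthonormal 𝕜 v) {i j : ι} (hij : i ≠ j) :
    1 < dist (v i) (v j) := by
  have h := hv.norm_sub_sq hij
  rw [dist_eq_norm]
  nlinarith [norm_nonneg (v i - v j)]

theorem Orthonormal.countable [TopologicalSpace.SeparableSpace E] (hv : Orthonormal 𝕜 v) :
    Countable ι :=
  Pairwise.countable_of_isOpen_disjoint (s := fun i => Metric.ball (v i) (1 / 2))
    (fun _ _ hij => Metric.ball_disjoint_ball (by linarith [hv.one_lt_dist hij]))
    (fun _ => Metric.isOpen_ball) (fun _ => Metric.nonempty_ball.2 one_half_pos)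

theorem HilbertBasis.infinite_of_not_finiteDimensional [CompleteSpace E]
    (b : HilbertBasis ι 𝕜 E) (h : ¬ FiniteDimensional 𝕜 E) : Infinite ι := by
  refine not_finite_iff_infinite.mp fun _ => h ?_
  have := Fintype.ofFinite ι
  exact b.toOrthonormalBasis.toBasis.finiteDimensional_of_finite

end Orthonormal

theorem HilbertBasis.isONBasisSeq_comp {E ι : Type*} [NormedAddCommGroup E]
    [InnerProductSpace ℂ E] [CompleteSpace E] (b : HilbertBasis ι ℂ E) (f : ℕ ≃ ι) :
    IsONBasisSeq (b ∘ f) := by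
  refine ⟨b.orthonormal.comp f f.injective, ?_⟩
  rw [Set.range_comp, f.range_eq_univ, Set.image_univ,
    Submodule.dense_iff_topologicalClosure_eq_top]
  exact b.dense_span

theorem exists_isONBasisSeq {E : Type*} [NormedAddCommGroup E] [InnerProductSpace ℂ E]
    [CompleteSpace E] [TopologicalSpace.SeparableSpace E] (h : ¬ FiniteDimensional ℂ E) :
    ∃ e : ℕ → E, IsONBasisSeq e := by
  obtain ⟨w, b, -⟩ := exists_hilbertBasis ℂ E
  have := b.orthonormal.countable
  have := b.infinite_of_not_finiteDimensional h
  obtain ⟨_⟩ := nonempty_denumerable w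
  exact ⟨_, b.isONBasisSeq_comp (Denumerable.eqv w).symm⟩

section Biorthogonal

variable {D H : Type*} [AddCommGroup D] [Module ℂ D] [TopologicalSpace D]
  [NormedAddCommGroup H] [InnerProductSpace ℂ H]

theorem eq_innerSLFlip_comp_of_biorthogonal {ζ : ℕ → D →SL[starRingEnd ℂ] ℂ} {ξ : ℕ → D}
    (hbio : ∀ n k : ℕ, ζ n (ξ k) = if n = k then 1 else 0)
    (htotal : Dense ((Submodule.span ℂ (Set.range ξ) : Submodule ℂ D) : Set D))
    {e : ℕ → H} (he : Orthonormal ℂ e) {S : D →L[ℂ] H} (hS : ∀ n, S (ξ n) = e n) (k : ℕ) :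
    ζ k = (innerSLFlip ℂ (e k)).comp S :=
  ContinuousLinearMap.ext_on htotal <| by
    classical
    rintro _ ⟨n, rfl⟩
    simp [hbio, hS, orthonormal_iff_ite.mp he, eq_comm]

theorem besselLike_innerSLFlip_comp {e : ℕ → H} (he : Orthonormal ℂ e) (S : D →L[ℂ] H) :
    BesselLike fun k => (innerSLFlip ℂ (e k)).comp S := by
  intro M hM
  obtain ⟨r, hr⟩ := (NormedSpace.image_isVonNBounded_iff ℂ).mp (hM.image S)
  refine ⟨r ^ 2, fun η hη N => ?_⟩
  calc ∑ k ∈ Finset.range N, ‖(innerSLFlip ℂ (e k)).comp S η‖ ^ 2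
      = ∑ k ∈ Finset.range N, ‖⟪e k, S η⟫_ℂ‖ ^ 2 := by
        simp only [ContinuousLinearMap.comp_apply, innerSLFlip_apply_apply, norm_inner_symm]
    _ ≤ ‖S η‖ ^ 2 := he.sum_inner_products_le (S η)
    _ ≤ r ^ 2 := pow_le_pow_left₀ (norm_nonneg _) (hr η hη) 2

end Biorthogonal

theorem statement10_general {D H : Type*} [AddCommGroup D] [Module ℂ D]
    [TopologicalSpace D]
    [NormedAddCommGroup H] [InnerProductSpace ℂ H] [CompleteSpace H]
    [TopologicalSpace.SeparableSpace H] (hinfdim : ¬ FiniteDimensional ℂ H)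
    (ζ : ℕ → (D →SL[starRingEnd ℂ] ℂ)) (ξ : ℕ → D)
    (hbio : ∀ n k : ℕ, ζ n (ξ k) = if n = k then 1 else 0)
    (htotal : Dense ((Submodule.span ℂ (Set.range ξ) : Submodule ℂ D) : Set D))
    (hRF : RieszFischerLike H ξ) :
    BesselLike ζ := by
  obtain ⟨e, he⟩ := exists_isONBasisSeq hinfdim
  obtain ⟨S, hS⟩ := hRF e he
  rw [funext (eq_innerSLFlip_comp_of_biorthogonal hbio htotal he.1 hS)]
  exact besselLike_innerSLFlip_comp he.1 S

/-- Proposition 2.16 of Bellomonte–Trapani: if a sequence `ζ ⊂ D^×` possesses a biorthogonal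
sequence `ξ ⊂ D` which is total (dense linear span in `D[t]`) and Riesz-Fischer-like, then `ζ`
is a Bessel-like sequence. -/
theorem statement10 {D H : Type*} [AddCommGroup D] [Module ℂ D] [Module ℝ D] [IsScalarTower ℝ ℂ D]
    [TopologicalSpace D] [IsTopologicalAddGroup D] [ContinuousSMul ℂ D] [T2Space D]
    [LocallyConvexSpace ℝ D]
    [NormedAddCommGroup H] [InnerProductSpace ℂ H] [CompleteSpace H]
    [TopologicalSpace.SeparableSpace H] (hinfdim : ¬ FiniteDimensional ℂ H)
    (ζ : ℕ → (D →SL[starRingEnd ℂ] ℂ)) (ξ : ℕ → D)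
    (hbio : ∀ n k : ℕ, ζ n (ξ k) = if n = k then 1 else 0)
    (htotal : Dense ((Submodule.span ℂ (Set.range ξ) : Submodule ℂ D) : Set D))
    (hRF : RieszFischerLike H ξ) :
    BesselLike ζ :=
  statement10_general hinfdim ζ ξ hbio htotal hRF
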